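/- arXiv:2509.24235 — 7 statements merged into one kernel-verified Lean document; each statement's English description precedes it below -/
import Mathlib

section
/- Under the non-duplicated-negation condition, if y(l,m) ∈ [0,1] for all l, m and z : Fin n → [0,1] together satisfy the LNF-relax logic constraints, then setting zφ(l,m) := y(l,m) and zφ_l := 1 for all l, m, the triple (zφ_l, zφ(l,m), z) satisfies the LT-relax logic constraints. -/
open Finset

/-- The LNF-relax logic constraints for a conjunctive–disjunctive specification
`φ = ⋀_l ⋁_m ⋀ literals`, encoded by positive/negated atom sets
`Pos l m, Neg l m ⊆ Fin n`. -/
def LNFRelaxConstraints {n L : ℕ} {M : Fin L → ℕ}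
    (Pos Neg : (l : Fin L) → Fin (M l) → Finset (Fin n))
    (y : (l : Fin L) → Fin (M l) → ℝ) (z : Fin n → ℝ) : Prop :=
  (∀ l, ∑ m, y l m = 1) ∧
  (∀ (l : Fin L) (j : Fin n),
      (∑ m ∈ univ.filter (fun m => j ∈ Pos l m), y l m) ≤ z j) ∧
  (∀ (l : Fin L) (j : Fin n), (∃ m, j ∈ Neg l m) →
      z j ≤ ∑ m ∈ univ.filter (fun m => j ∈ Neg l m), (1 - y l m)) ∧
  (∀ (l : Fin L) (m : Fin (M l)),
      1 - (((Pos l m).card : ℝ) + ((Neg l m).card : ℝ))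
        + ∑ j ∈ Pos l m, z j + ∑ j ∈ Neg l m, (1 - z j) ≤ y l m)

/-- The LT-relax logic constraints for the same specification, with parent
variables `zphiL l` for the disjunction nodes and `zphi l m` for the inner
conjunction nodes. -/
def LTRelaxConstraints {n L : ℕ} {M : Fin L → ℕ}
    (Pos Neg : (l : Fin L) → Fin (M l) → Finset (Fin n))
    (zphiL : Fin L → ℝ) (zphi : (l : Fin L) → Fin (M l) → ℝ)
    (z : Fin n → ℝ) : Prop :=
  (∀ l, zphiL l = 1) ∧
  (∀ (l : Fin L) (m : Fin (M l)), zphi l m ≤ zphiL l) ∧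
  (∀ l, zphiL l ≤ ∑ m, zphi l m) ∧
  (∀ (l : Fin L) (m : Fin (M l)),
      1 - (((Pos l m).card : ℝ) + ((Neg l m).card : ℝ))
        + ∑ j ∈ Pos l m, z j + ∑ j ∈ Neg l m, (1 - z j) ≤ zphi l m) ∧
  (∀ (l : Fin L) (m : Fin (M l)) (j : Fin n), j ∈ Pos l m → zphi l m ≤ z j) ∧
  (∀ (l : Fin L) (m : Fin (M l)) (j : Fin n), j ∈ Neg l m → z j ≤ 1 - zphi l m)

/-- Under the non-duplicated-negation condition, any
`(y, z)` with `y(l,m) ∈ [0,1]`, `z j ∈ [0,1]` satisfying the LNF-relax logic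
constraints yields, via `zφ(l,m) := y(l,m)` and `zφ_l := 1`, a solution of the
LT-relax logic constraints. -/
theorem lnfRelax_implies_ltRelax (n L : ℕ) (hn : 1 ≤ n) (hL : 1 ≤ L)
    (M : Fin L → ℕ) (hM : ∀ l, 1 ≤ M l)
    (Pos Neg : (l : Fin L) → Fin (M l) → Finset (Fin n))
    (hdisj : ∀ (l : Fin L) (m : Fin (M l)), Disjoint (Pos l m) (Neg l m))
    (hnodup : ∀ (l : Fin L) (j : Fin n) (m m' : Fin (M l)),
      j ∈ Neg l m → j ∈ Neg l m' → m = m')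
    (y : (l : Fin L) → Fin (M l) → ℝ) (z : Fin n → ℝ)
    (hy : ∀ (l : Fin L) (m : Fin (M l)), y l m ∈ Set.Icc (0 : ℝ) 1)
    (hz : ∀ j, z j ∈ Set.Icc (0 : ℝ) 1)
    (hlnf : LNFRelaxConstraints Pos Neg y z) :
    LTRelaxConstraints Pos Neg (fun _ => 1) y z := by
  obtain ⟨hsum, hpos, hneg, hlow⟩ := hlnf
  refine ⟨fun l => rfl, fun l m => (hy l m).2, ?_, hlow, ?_, ?_⟩
  · intro l; simp [hsum l]
  · intro l m j hj
    calc y l m ≤ ∑ m' ∈ univ.filter (fun m' => j ∈ Pos l m'), y l m' := by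
          exact Finset.single_le_sum (fun i _ => (hy l i).1)
            (Finset.mem_filter.mpr ⟨Finset.mem_univ m, hj⟩)
      _ ≤ z j := hpos l j
  · intro l m j hj
    have h := hneg l j ⟨m, hj⟩
    have hfil : univ.filter (fun m' => j ∈ Neg l m') = {m} := by
      ext m'
      simp only [Finset.mem_filter, Finset.mem_univ, true_and, Finset.mem_singleton]
      exact ⟨fun h' => hnodup l j m' m h' hj, fun h' => h' ▸ hj⟩
    rw [hfil, Finset.sum_singleton] at h
    linarith
end

section
/- Assume the non-duplicated-negation condition. Let X be any type whose elements represent trajectories ξ = (x, u) of the shared dynamical system, let D ⊆ X × (Fin n → [0,1]) be any set encoding the shared system-dynamics and atomic-predicate constraints, and let J : X × (Fin n → [0,1]) → ℝ be any objective function (for instance J(x,u,z) = xᵀQx + uᵀRu + Θᵀz). Then the set of objective values attained on the LNF-relax feasible set {(ξ, z) : (ξ, z) ∈ D and there exist y(l,m) ∈ [0,1] satisfying the LNF-relax logic constraints with z} is contained in the set of objective values attained on the LT-relax feasible set {(ξ, z) : (ξ, z) ∈ D and there exist zφ_l, zφ(l,m) ∈ [0,1] satisfying the LT-relax logic constraints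 with z}. Consequently, if the LNF-relax problem is feasible then the LT-relax problem is feasible, and the infimum of J over the LT-relax feasible set (in the extended reals) is at most the infimum of J over the LNF-relax feasible set. -/
open Finset

/-!
An LNF-relax solution `y` yields an LT-relax solution with `zφ(l, m) := y(l, m)` and
`zφ_l := 1`. Since `y(l, ·)` is nonnegative and sums to `1`, each `y(l, m)` is at most `1` and at
most every partial sum of `y(l, ·)` containing it, which gives the positive-literal constraints.
For a negated atom `j` of the conjunct `(l, m)`, the LNF bound `z j ≤ ∑ (1 - y(l, m'))` has the
single summand `m' = m` because `j` is negated in no other conjunct of clause `l`. So the LNF-relax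
feasible set lies inside the LT-relax one, and the three conclusions follow by monotonicity.
-/

section Feasibility

variable {n L : ℕ} {M : Fin L → ℕ}

def NonDuplicatedNegation (Neg : (l : Fin L) → Fin (M l) → Finset (Fin n)) : Prop :=
  ∀ (l : Fin L) (j : Fin n) (m m' : Fin (M l)), j ∈ Neg l m → j ∈ Neg l m' → m = m'

theorem LNFRelaxConstraints.ltRelaxConstraints
    {Pos Neg : (l : Fin L) → Fin (M l) → Finset (Fin n)}
    (hnodup : NonDuplicatedNegation Neg) {y : (l : Fin L) → Fin (M l) → ℝ} {z : Fin n → ℝ}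
    (hy : ∀ l m, 0 ≤ y l m) (h : LNFRelaxConstraints Pos Neg y z) :
    LTRelaxConstraints Pos Neg (fun _ => 1) y z := by
  obtain ⟨hsum, hpos, hneg, hconj⟩ := h
  refine ⟨fun _ => rfl, fun l m => ?_, fun l => (hsum l).ge, hconj, fun l m j hj => ?_,
    fun l m j hj => ?_⟩
  · calc y l m ≤ ∑ m', y l m' := single_le_sum (fun m' _ => hy l m') (mem_univ m)
      _ = 1 := hsum l
  · calc y l m ≤ ∑ m' ∈ univ.filter (fun m' => j ∈ Pos l m'), y l m' :=
          single_le_sum (fun m' _ => hy l m') (by simpa using hj)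
      _ ≤ z j := hpos l j
  · have hsingle : ∑ m' ∈ univ.filter (fun m' => j ∈ Neg l m'), (1 - y l m') = 1 - y l m :=
      sum_eq_single_of_mem m (by simpa using hj) fun m' hm' hne =>
        absurd (hnodup l j m' m (by simpa using hm') hj) hne
    exact hsingle ▸ hneg l j ⟨m, hj⟩

variable {X : Type*}

def lnfRelaxFeasibleSet (Pos Neg : (l : Fin L) → Fin (M l) → Finset (Fin n))
    (D : Set (X × (Fin n → ℝ))) : Set (X × (Fin n → ℝ)) :=
  {p | p ∈ D ∧ (∀ j, p.2 j ∈ Set.Icc (0 : ℝ) 1) ∧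
    ∃ y : (l : Fin L) → Fin (M l) → ℝ,
      (∀ l m, y l m ∈ Set.Icc (0 : ℝ) 1) ∧ LNFRelaxConstraints Pos Neg y p.2}

def ltRelaxFeasibleSet (Pos Neg : (l : Fin L) → Fin (M l) → Finset (Fin n))
    (D : Set (X × (Fin n → ℝ))) : Set (X × (Fin n → ℝ)) :=
  {p | p ∈ D ∧ (∀ j, p.2 j ∈ Set.Icc (0 : ℝ) 1) ∧
    ∃ (zphiL : Fin L → ℝ) (zphi : (l : Fin L) → Fin (M l) → ℝ),
      (∀ l, zphiL l ∈ Set.Icc (0 : ℝ) 1) ∧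
      (∀ l m, zphi l m ∈ Set.Icc (0 : ℝ) 1) ∧
      LTRelaxConstraints Pos Neg zphiL zphi p.2}

theorem lnfRelaxFeasibleSet_subset_ltRelaxFeasibleSet
    {Pos Neg : (l : Fin L) → Fin (M l) → Finset (Fin n)} (hnodup : NonDuplicatedNegation Neg)
    (D : Set (X × (Fin n → ℝ))) :
    lnfRelaxFeasibleSet Pos Neg D ⊆ ltRelaxFeasibleSet Pos Neg D := by
  rintro p ⟨hD, hz, y, hy, hlnf⟩
  exact ⟨hD, hz, fun _ => 1, y, fun _ => ⟨zero_le_one, le_rfl⟩, hy,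
    hlnf.ltRelaxConstraints hnodup fun l m => (hy l m).1⟩

end Feasibility

theorem ltRelax_infimum_le_lnfRelax_infimum_general (n L : ℕ)
    (M : Fin L → ℕ)
    (Pos Neg : (l : Fin L) → Fin (M l) → Finset (Fin n))
    (hnodup : ∀ (l : Fin L) (j : Fin n) (m m' : Fin (M l)),
      j ∈ Neg l m → j ∈ Neg l m' → m = m')
    (X : Type*) (D : Set (X × (Fin n → ℝ)))
    (J : X × (Fin n → ℝ) → ℝ) :
    (J '' {p : X × (Fin n → ℝ) | p ∈ D ∧ (∀ j, p.2 j ∈ Set.Icc (0 : ℝ) 1) ∧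
        ∃ y : (l : Fin L) → Fin (M l) → ℝ,
          (∀ l m, y l m ∈ Set.Icc (0 : ℝ) 1) ∧ LNFRelaxConstraints Pos Neg y p.2}
      ⊆ J '' {p : X × (Fin n → ℝ) | p ∈ D ∧ (∀ j, p.2 j ∈ Set.Icc (0 : ℝ) 1) ∧
        ∃ (zphiL : Fin L → ℝ) (zphi : (l : Fin L) → Fin (M l) → ℝ),
          (∀ l, zphiL l ∈ Set.Icc (0 : ℝ) 1) ∧
          (∀ l m, zphi l m ∈ Set.Icc (0 : ℝ) 1) ∧
          LTRelaxConstraints Pos Neg zphiL zphi p.2}) ∧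
    ({p : X × (Fin n → ℝ) | p ∈ D ∧ (∀ j, p.2 j ∈ Set.Icc (0 : ℝ) 1) ∧
        ∃ y : (l : Fin L) → Fin (M l) → ℝ,
          (∀ l m, y l m ∈ Set.Icc (0 : ℝ) 1) ∧
          LNFRelaxConstraints Pos Neg y p.2}.Nonempty →
      {p : X × (Fin n → ℝ) | p ∈ D ∧ (∀ j, p.2 j ∈ Set.Icc (0 : ℝ) 1) ∧
        ∃ (zphiL : Fin L → ℝ) (zphi : (l : Fin L) → Fin (M l) → ℝ),
          (∀ l, zphiL l ∈ Set.Icc (0 : ℝ) 1) ∧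
          (∀ l m, zphi l m ∈ Set.Icc (0 : ℝ) 1) ∧
          LTRelaxConstraints Pos Neg zphiL zphi p.2}.Nonempty) ∧
    sInf ((fun p => (J p : EReal)) ''
        {p : X × (Fin n → ℝ) | p ∈ D ∧ (∀ j, p.2 j ∈ Set.Icc (0 : ℝ) 1) ∧
          ∃ (zphiL : Fin L → ℝ) (zphi : (l : Fin L) → Fin (M l) → ℝ),
            (∀ l, zphiL l ∈ Set.Icc (0 : ℝ) 1) ∧
            (∀ l m, zphi l m ∈ Set.Icc (0 : ℝ) 1) ∧
            LTRelaxConstraints Pos Neg zphiL zphi p.2})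
      ≤ sInf ((fun p => (J p : EReal)) ''
        {p : X × (Fin n → ℝ) | p ∈ D ∧ (∀ j, p.2 j ∈ Set.Icc (0 : ℝ) 1) ∧
          ∃ y : (l : Fin L) → Fin (M l) → ℝ,
            (∀ l m, y l m ∈ Set.Icc (0 : ℝ) 1) ∧
            LNFRelaxConstraints Pos Neg y p.2}) := by
  have hsub := lnfRelaxFeasibleSet_subset_ltRelaxFeasibleSet (Pos := Pos) hnodup D
  exact ⟨Set.image_mono hsub, fun hne => hne.mono hsub, sInf_le_sInf (Set.image_mono hsub)⟩

/-- (Tighter convex relaxation.) For a shared dynamics/predicate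
set `D` and objective `J` independent of the logic variables, the objective
values attained on the LNF-relax feasible set are contained in those attained
on the LT-relax feasible set; hence feasibility of LNF-relax implies
feasibility of LT-relax and the LT-relax infimum (in the extended reals) is at
most the LNF-relax infimum. -/
theorem ltRelax_infimum_le_lnfRelax_infimum (n L : ℕ) (hn : 1 ≤ n) (hL : 1 ≤ L)
    (M : Fin L → ℕ) (hM : ∀ l, 1 ≤ M l)
    (Pos Neg : (l : Fin L) → Fin (M l) → Finset (Fin n))
    (hdisj : ∀ (l : Fin L) (m : Fin (M l)), Disjoint (Pos l m) (Neg l m))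
    (hnodup : ∀ (l : Fin L) (j : Fin n) (m m' : Fin (M l)),
      j ∈ Neg l m → j ∈ Neg l m' → m = m')
    (X : Type*) (D : Set (X × (Fin n → ℝ)))
    (hDdom : ∀ p ∈ D, ∀ j, p.2 j ∈ Set.Icc (0 : ℝ) 1)
    (J : X × (Fin n → ℝ) → ℝ) :
    (J '' {p : X × (Fin n → ℝ) | p ∈ D ∧ (∀ j, p.2 j ∈ Set.Icc (0 : ℝ) 1) ∧
        ∃ y : (l : Fin L) → Fin (M l) → ℝ,
          (∀ l m, y l m ∈ Set.Icc (0 : ℝ) 1) ∧ LNFRelaxConstraints Pos Neg y p.2}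
      ⊆ J '' {p : X × (Fin n → ℝ) | p ∈ D ∧ (∀ j, p.2 j ∈ Set.Icc (0 : ℝ) 1) ∧
        ∃ (zphiL : Fin L → ℝ) (zphi : (l : Fin L) → Fin (M l) → ℝ),
          (∀ l, zphiL l ∈ Set.Icc (0 : ℝ) 1) ∧
          (∀ l m, zphi l m ∈ Set.Icc (0 : ℝ) 1) ∧
          LTRelaxConstraints Pos Neg zphiL zphi p.2}) ∧
    ({p : X × (Fin n → ℝ) | p ∈ D ∧ (∀ j, p.2 j ∈ Set.Icc (0 : ℝ) 1) ∧
        ∃ y : (l : Fin L) → Fin (M l) → ℝ,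
          (∀ l m, y l m ∈ Set.Icc (0 : ℝ) 1) ∧
          LNFRelaxConstraints Pos Neg y p.2}.Nonempty →
      {p : X × (Fin n → ℝ) | p ∈ D ∧ (∀ j, p.2 j ∈ Set.Icc (0 : ℝ) 1) ∧
        ∃ (zphiL : Fin L → ℝ) (zphi : (l : Fin L) → Fin (M l) → ℝ),
          (∀ l, zphiL l ∈ Set.Icc (0 : ℝ) 1) ∧
          (∀ l m, zphi l m ∈ Set.Icc (0 : ℝ) 1) ∧
          LTRelaxConstraints Pos Neg zphiL zphi p.2}.Nonempty) ∧
    sInf ((fun p => (J p : EReal)) ''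
        {p : X × (Fin n → ℝ) | p ∈ D ∧ (∀ j, p.2 j ∈ Set.Icc (0 : ℝ) 1) ∧
          ∃ (zphiL : Fin L → ℝ) (zphi : (l : Fin L) → Fin (M l) → ℝ),
            (∀ l, zphiL l ∈ Set.Icc (0 : ℝ) 1) ∧
            (∀ l m, zphi l m ∈ Set.Icc (0 : ℝ) 1) ∧
            LTRelaxConstraints Pos Neg zphiL zphi p.2})
      ≤ sInf ((fun p => (J p : EReal)) ''
        {p : X × (Fin n → ℝ) | p ∈ D ∧ (∀ j, p.2 j ∈ Set.Icc (0 : ℝ) 1) ∧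
          ∃ y : (l : Fin L) → Fin (M l) → ℝ,
            (∀ l m, y l m ∈ Set.Icc (0 : ℝ) 1) ∧
            LNFRelaxConstraints Pos Neg y p.2}) :=
  ltRelax_infimum_le_lnfRelax_infimum_general n L M Pos Neg hnodup X D J
end

section
/- For the single-integrator counter-example instance, the minimum of z1 + z2 + z3 over all (x0, x1, x2, u0, u1, z1, z2, z3, y1, y2) with y1, y2 ∈ [0,1] satisfying the instance constraints together with the LNF-relax logic constraints y1 + y2 = 1, z1 ≥ y1, z2 ≥ y1 + y2, z3 ≥ y2, y1 ≥ z1 + z2 − 1, and y2 ≥ z2 + z3 − 1 is attained and equals 2; in particular it is strictly larger than the LT-relax optimum 3/2 of the same instance, so the converse of the tighter-relaxation theorem fails. -/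
/-- The shared single-integrator counter-example instance constraints:
dynamics, state/input bounds, relaxed predicate variables in `[0,1]`, and the
big-M coupling constraints encoding `π₁ : x₁ = 1`, `π₂ : x₂ = 0`,
`π₃ : x₁ = −1`. -/
def InstanceConstraints (x0 x1 x2 u0 u1 z1 z2 z3 : ℝ) : Prop :=
  x1 = x0 + u0 ∧ x2 = x1 + u1 ∧
  |x0| ≤ 1 ∧ |x1| ≤ 1 ∧ |x2| ≤ 1 ∧ |u0| ≤ 1 ∧ |u1| ≤ 1 ∧
  0 ≤ z1 ∧ z1 ≤ 1 ∧ 0 ≤ z2 ∧ z2 ≤ 1 ∧ 0 ≤ z3 ∧ z3 ≤ 1 ∧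
  2 * z1 - 1 ≤ x1 ∧ x1 ≤ 1 ∧
  z2 - 1 ≤ x2 ∧ x2 ≤ 1 - z2 ∧
  -1 ≤ x1 ∧ x1 ≤ 1 - 2 * z3

/-- For the single-integrator counter-example instance with
the LNF-relax logic constraints, the minimum of `z1 + z2 + z3` is attained and
equals `2`; in particular it is strictly larger than the LT-relax optimum
`3/2` of the same instance, so the converse of the tighter-relaxation theorem
fails. -/
theorem lnfRelax_counterexample_optimum :
    IsLeast {c : ℝ | ∃ x0 x1 x2 u0 u1 z1 z2 z3 y1 y2 : ℝ,
      InstanceConstraints x0 x1 x2 u0 u1 z1 z2 z3 ∧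
      0 ≤ y1 ∧ y1 ≤ 1 ∧ 0 ≤ y2 ∧ y2 ≤ 1 ∧
      y1 + y2 = 1 ∧
      y1 ≤ z1 ∧ y1 + y2 ≤ z2 ∧ y2 ≤ z3 ∧
      z1 + z2 - 1 ≤ y1 ∧
      z2 + z3 - 1 ≤ y2 ∧
      c = z1 + z2 + z3} (2 : ℝ) ∧
    IsLeast {c : ℝ | ∃ x0 x1 x2 u0 u1 z1 z2 z3 zphi1 zphi2 : ℝ,
      InstanceConstraints x0 x1 x2 u0 u1 z1 z2 z3 ∧
      0 ≤ zphi1 ∧ zphi1 ≤ 1 ∧ 0 ≤ zphi2 ∧ zphi2 ≤ 1 ∧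
      1 ≤ zphi1 + zphi2 ∧
      z1 + z2 - 1 ≤ zphi1 ∧
      z2 + z3 - 1 ≤ zphi2 ∧
      zphi1 ≤ z1 ∧ zphi1 ≤ z2 ∧ zphi2 ≤ z2 ∧ zphi2 ≤ z3 ∧
      c = z1 + z2 + z3} (3 / 2) ∧
    (3 / 2 : ℝ) < 2 := by
  refine ⟨⟨⟨0, 1, 0, 1, -1, 1, 1, 0, 1, 0, ?_, by norm_num⟩, ?_⟩,
    ⟨⟨0, 0, 0, 0, 0, 1/2, 1/2, 1/2, 1/2, 1/2, ?_, by norm_num⟩, ?_⟩, by norm_num⟩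
  · unfold InstanceConstraints
    norm_num
  · rintro c ⟨x0, x1, x2, u0, u1, z1, z2, z3, y1, y2,
      ⟨_, _, _, _, _, _, _, hz1, _, _, _, hz3, _, _, _, _, _, _, _⟩,
      _, _, _, _, hy, h1, h2, h3, _, _, rfl⟩
    linarith
  · unfold InstanceConstraints
    norm_num
  · rintro c ⟨x0, x1, x2, u0, u1, z1, z2, z3, p1, p2,
      ⟨_, _, _, _, _, _, _, _, _, _, _, _, _, _, _, _, _, _, _⟩,
      _, _, _, _, hs, _, _, h1, h2, h3, h4, rfl⟩
    linarith
end

section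
/- Assume every atom is negated in at most one conjunct, i.e., for every j ∈ Fin n there is at most one m ∈ Fin M with j ∈ Neg m. Let y : Fin M → ℝ and z : Fin n → ℝ take values in {0,1} and satisfy the LNF logic constraints (lnf1), (lnf2), and (lnf3). Then there exists m ∈ Fin M with y m = 1, z j = 1 for every j ∈ Pos m, and z j = 0 for every j ∈ Neg m; in particular z satisfies the formula φ (soundness of the Logic Network Flow formulation). -/
open Finset

/-- (Soundness of the LNF formulation.) Assume each atom is
negated in at most one conjunct. If binary `y : Fin M → ℝ` and
`z : Fin n → ℝ` satisfy the LNF logic constraints (lnf1)–(lnf3), then some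
conjunct `m` has `y m = 1`, `z j = 1` for all positively occurring atoms and
`z j = 0` for all negated atoms of that conjunct; in particular `z` satisfies
the DNF formula `φ`. -/
theorem lnf_soundness (n M : ℕ) (hn : 1 ≤ n) (hM : 1 ≤ M)
    (Pos Neg : Fin M → Finset (Fin n))
    (hdisj : ∀ m, Disjoint (Pos m) (Neg m))
    (hnodup : ∀ (j : Fin n) (m m' : Fin M), j ∈ Neg m → j ∈ Neg m' → m = m')
    (y : Fin M → ℝ) (hybin : ∀ m, y m = 0 ∨ y m = 1)
    (z : Fin n → ℝ) (hzbin : ∀ j, z j = 0 ∨ z j = 1)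
    (lnf1 : ∑ m, y m = 1)
    (lnf2 : ∀ j : Fin n, (∑ m ∈ univ.filter (fun m => j ∈ Pos m), y m) ≤ z j)
    (lnf3 : ∀ j : Fin n, (∃ m, j ∈ Neg m) →
      z j ≤ ∑ m ∈ univ.filter (fun m => j ∈ Neg m), (1 - y m)) :
    ∃ m : Fin M, y m = 1 ∧ (∀ j ∈ Pos m, z j = 1) ∧ (∀ j ∈ Neg m, z j = 0) := by
  -- find m with y m = 1
  have hex : ∃ m : Fin M, y m = 1 := by
    by_contra h
    push_neg at h
    have h0 : ∀ m : Fin M, y m = 0 := fun m => (hybin m).resolve_right (h m)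
    simp [h0] at lnf1
  obtain ⟨m, hm⟩ := hex
  refine ⟨m, hm, ?_, ?_⟩
  · intro j hj
    have h1 : (1 : ℝ) ≤ ∑ m' ∈ univ.filter (fun m' => j ∈ Pos m'), y m' := by
      rw [← hm]
      refine Finset.single_le_sum (fun i _ => ?_) (by simp [hj])
      rcases hybin i with h | h <;> simp [h]
    have := le_trans h1 (lnf2 j)
    rcases hzbin j with h | h
    · linarith
    · exact h
  · intro j hj
    have hfilt : univ.filter (fun m' => j ∈ Neg m') = {m} := by
      ext m'
      simp only [mem_filter, mem_univ, true_and, mem_singleton]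
      exact ⟨fun h => hnodup j m' m h hj, fun h => h ▸ hj⟩
    have h3 := lnf3 j ⟨m, hj⟩
    rw [hfilt] at h3
    simp [hm] at h3
    have h4 : (0:ℝ) ≤ z j := by rcases hzbin j with h | h <;> simp [h]
    linarith
end

section
/- Let z : Fin n → ℝ take values in {0,1} and suppose z satisfies conjunct m* for some m* ∈ Fin M, i.e., z j = 1 for every j ∈ Pos m* and z j = 0 for every j ∈ Neg m*. Define y : Fin M → ℝ by y m = 1 if m = m* and y m = 0 otherwise. Then (y, z) satisfies the LNF logic constraints (lnf1), (lnf2), and (lnf3) (completeness of the Logic Network Flow formulation). -/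
open Finset

/-- (Completeness of the LNF formulation.) If a binary
vector `z` satisfies conjunct `m*` of the DNF formula (`z j = 1` on
`Pos m*`, `z j = 0` on `Neg m*`), then the indicator `y` of `m*` together
with `z` satisfies the LNF logic constraints (lnf1)–(lnf3). -/
theorem lnf_completeness (n M : ℕ) (hn : 1 ≤ n) (hM : 1 ≤ M)
    (Pos Neg : Fin M → Finset (Fin n))
    (hdisj : ∀ m, Disjoint (Pos m) (Neg m))
    (z : Fin n → ℝ) (hzbin : ∀ j, z j = 0 ∨ z j = 1)
    (mstar : Fin M)
    (hpos : ∀ j ∈ Pos mstar, z j = 1) (hneg : ∀ j ∈ Neg mstar, z j = 0) :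
    (∑ m, (if m = mstar then (1 : ℝ) else 0) = 1) ∧
    (∀ j : Fin n,
      (∑ m ∈ univ.filter (fun m => j ∈ Pos m),
        (if m = mstar then (1 : ℝ) else 0)) ≤ z j) ∧
    (∀ j : Fin n, (∃ m, j ∈ Neg m) →
      z j ≤ ∑ m ∈ univ.filter (fun m => j ∈ Neg m),
        (1 - (if m = mstar then (1 : ℝ) else 0))) := by
  refine ⟨by simp, ?_, ?_⟩
  · intro j
    by_cases hj : j ∈ Pos mstar
    · have : (∑ m ∈ univ.filter (fun m => j ∈ Pos m),
          (if m = mstar then (1 : ℝ) else 0)) = 1 := by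
        rw [Finset.sum_ite_eq' _ mstar (fun _ => (1:ℝ))]
        simp [hj]
      rw [this, hpos j hj]
    · have : (∑ m ∈ univ.filter (fun m => j ∈ Pos m),
          (if m = mstar then (1 : ℝ) else 0)) = 0 := by
        rw [Finset.sum_ite_eq' _ mstar (fun _ => (1:ℝ))]
        simp [hj]
      rw [this]
      rcases hzbin j with h | h <;> simp [h]
  · intro j ⟨m0, hm0⟩
    by_cases hj : j ∈ Neg mstar
    · have : z j = 0 := hneg j hj
      rw [this]
      apply Finset.sum_nonneg
      intro m _
      split <;> norm_num
    · have h1 : (∑ m ∈ univ.filter (fun m => j ∈ Neg m),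
          (1 - (if m = mstar then (1 : ℝ) else 0))) =
          ∑ m ∈ univ.filter (fun m => j ∈ Neg m), (1 : ℝ) := by
        apply Finset.sum_congr rfl
        intro m hm
        simp only [Finset.mem_filter] at hm
        have : m ≠ mstar := fun h => hj (h ▸ hm.2)
        simp [this]
      rw [h1, Finset.sum_const, nsmul_eq_mul, mul_one]
      have hcard : 1 ≤ (univ.filter (fun m => j ∈ Neg m)).card := by
        apply Finset.card_pos.mpr
        exact ⟨m0, Finset.mem_filter.mpr ⟨Finset.mem_univ _, hm0⟩⟩
      calc z j ≤ 1 := by rcases hzbin j with h | h <;> simp [h]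
        _ ≤ _ := by exact_mod_cast hcard
end

section
/- Assume every atom is negated in at most one conjunct, i.e., for every j ∈ Fin n there is at most one m ∈ Fin M with j ∈ Neg m. Then the set of binary vectors z : Fin n → {0,1} for which there exists a binary vector y : Fin M → {0,1} such that (y, z) satisfies the LNF logic constraints (lnf1), (lnf2), and (lnf3) equals the set of binary vectors z satisfying the formula φ. Consequently, for every objective function f : (Fin n → ℝ) → ℝ (independent of y), the optimal value of f over binary (y, z) feasible for the LNF logic constraints equals the optimal value of f over binary z satisfying φ, and optimal solutions correspond to each other. -/
open Finset

/-- (Exactness of the binary LNF feasible set.) Under the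
non-duplicated-negation condition, the set of binary vectors `z` admitting a
binary `y` with `(y, z)` feasible for the LNF logic constraints equals the set
of binary vectors `z` satisfying the DNF formula `φ`; consequently, for any
objective `f` depending only on `z`, the attained objective values (hence the
optimal values and optimal solutions) coincide. -/
theorem lnf_binary_feasible_set_eq (n M : ℕ) (hn : 1 ≤ n) (hM : 1 ≤ M)
    (Pos Neg : Fin M → Finset (Fin n))
    (hdisj : ∀ m, Disjoint (Pos m) (Neg m))
    (hnodup : ∀ (j : Fin n) (m m' : Fin M), j ∈ Neg m → j ∈ Neg m' → m = m') :
    ({z : Fin n → ℝ | (∀ j, z j = 0 ∨ z j = 1) ∧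
        ∃ y : Fin M → ℝ, (∀ m, y m = 0 ∨ y m = 1) ∧
          (∑ m, y m = 1) ∧
          (∀ j : Fin n,
            (∑ m ∈ univ.filter (fun m => j ∈ Pos m), y m) ≤ z j) ∧
          (∀ j : Fin n, (∃ m, j ∈ Neg m) →
            z j ≤ ∑ m ∈ univ.filter (fun m => j ∈ Neg m), (1 - y m))}
      = {z : Fin n → ℝ | (∀ j, z j = 0 ∨ z j = 1) ∧
          ∃ m : Fin M, (∀ j ∈ Pos m, z j = 1) ∧ (∀ j ∈ Neg m, z j = 0)}) ∧
    (∀ f : (Fin n → ℝ) → ℝ,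
      f '' {z : Fin n → ℝ | (∀ j, z j = 0 ∨ z j = 1) ∧
        ∃ y : Fin M → ℝ, (∀ m, y m = 0 ∨ y m = 1) ∧
          (∑ m, y m = 1) ∧
          (∀ j : Fin n,
            (∑ m ∈ univ.filter (fun m => j ∈ Pos m), y m) ≤ z j) ∧
          (∀ j : Fin n, (∃ m, j ∈ Neg m) →
            z j ≤ ∑ m ∈ univ.filter (fun m => j ∈ Neg m), (1 - y m))}
      = f '' {z : Fin n → ℝ | (∀ j, z j = 0 ∨ z j = 1) ∧
          ∃ m : Fin M, (∀ j ∈ Pos m, z j = 1) ∧ (∀ j ∈ Neg m, z j = 0)}) := by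

  have hset : ({z : Fin n → ℝ | (∀ j, z j = 0 ∨ z j = 1) ∧
        ∃ y : Fin M → ℝ, (∀ m, y m = 0 ∨ y m = 1) ∧
          (∑ m, y m = 1) ∧
          (∀ j : Fin n,
            (∑ m ∈ univ.filter (fun m => j ∈ Pos m), y m) ≤ z j) ∧
          (∀ j : Fin n, (∃ m, j ∈ Neg m) →
            z j ≤ ∑ m ∈ univ.filter (fun m => j ∈ Neg m), (1 - y m))}
      = {z : Fin n → ℝ | (∀ j, z j = 0 ∨ z j = 1) ∧
          ∃ m : Fin M, (∀ j ∈ Pos m, z j = 1) ∧ (∀ j ∈ Neg m, z j = 0)}) := by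
    ext z
    simp only [Set.mem_setOf_eq]
    constructor
    · rintro ⟨hz, y, hy, hsum, hpos, hneg⟩
      refine ⟨hz, ?_⟩
      obtain ⟨m₀, hm₀⟩ : ∃ m, y m = 1 := by
        by_contra h
        push_neg at h
        have h0 : ∀ m, y m = 0 := fun m => (hy m).resolve_right (h m)
        simp [h0] at hsum
      refine ⟨m₀, ?_, ?_⟩
      · intro j hj
        have h1 : (1:ℝ) ≤ z j := by
          refine le_trans ?_ (hpos j)
          calc (1:ℝ) = y m₀ := hm₀.symm
          _ ≤ ∑ m ∈ filter (fun m => j ∈ Pos m) univ, y m :=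
            Finset.single_le_sum (fun m _ => by rcases hy m with h|h <;> simp [h])
              (by simp [hj])
        rcases hz j with h|h <;> linarith
      · intro j hj
        have hfil : filter (fun m => j ∈ Neg m) univ = {m₀} := by
          ext m
          simp only [mem_filter, mem_univ, true_and, mem_singleton]
          exact ⟨fun hm => hnodup j m m₀ hm hj, fun h => h ▸ hj⟩
        have hle := hneg j ⟨m₀, hj⟩
        rw [hfil] at hle
        simp only [sum_singleton, hm₀, sub_self] at hle
        rcases hz j with h|h
        · exact h
        · linarith
    · rintro ⟨hz, m₀, hp, hn'⟩
      have hznn : ∀ j, (0:ℝ) ≤ z j := fun j => by rcases hz j with h|h <;> linarith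
      refine ⟨hz, fun m => if m = m₀ then 1 else 0, fun m => by by_cases h : m = m₀ <;> simp [h],
        by simp, ?_, ?_⟩
      · intro j
        rw [Finset.sum_ite_eq' (filter (fun m => j ∈ Pos m) univ) m₀ (fun _ => (1:ℝ))]
        simp only [mem_filter, mem_univ, true_and]
        split
        · next hjp => rw [hp j hjp]
        · exact hznn j
      · intro j hj
        by_cases hjn : j ∈ Neg m₀
        · have hfil : filter (fun m => j ∈ Neg m) univ = {m₀} := by
            ext m
            simp only [mem_filter, mem_univ, true_and, mem_singleton]
            exact ⟨fun hm => hnodup j m m₀ hm hjn, fun h => h ▸ hjn⟩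
          rw [hfil]
          simp [hn' j hjn]
        · obtain ⟨m₁, hm₁⟩ := hj
          have hmem : m₁ ∈ filter (fun m => j ∈ Neg m) univ := by simp [hm₁]
          have hone : ∀ m ∈ filter (fun m => j ∈ Neg m) univ,
              (1:ℝ) - (if m = m₀ then 1 else 0) = 1 := by
            intro m hm
            simp only [mem_filter, mem_univ, true_and] at hm
            have : m ≠ m₀ := fun h => hjn (h ▸ hm)
            simp [this]
          rw [Finset.sum_congr rfl hone]
          rw [Finset.sum_const]
          have hc : 1 ≤ (filter (fun m => j ∈ Neg m) univ).card :=
            Finset.card_pos.mpr ⟨m₁, hmem⟩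
          have : (1:ℝ) ≤ (filter (fun m => j ∈ Neg m) univ).card • (1:ℝ) := by
            simp only [nsmul_eq_mul, mul_one]
            exact_mod_cast hc
          rcases hz j with h|h <;> linarith
  exact ⟨hset, fun f => by rw [hset]⟩
end

section
/- Let G be a finite acyclic directed graph with edge set E and distinguished distinct vertices s and t, let c : E → ℝ be edge costs, and let (S_1, b_1), …, (S_N, b_N) be finitely many predicate constraints with S_i ⊆ E and b_i ∈ {0,1} such that every directed s–t path of G contains at most one edge from each S_i. Let F be the set of unit s–t flows r : E → ℝ satisfying Σ_{e ∈ S_i} r e = b_i for every i. If F is nonempty, then the linear cost Σ_{e ∈ E} c e · r e attains its minimum over F at some flow r* all of whose values lie in {0,1}; in other words, the linear programming relaxation of the dynamic network flow formulation with fixed binary predicate values is tight. -/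
/-!
A unit `s`–`t` flow on an acyclic graph is a convex combination of indicator vectors of
`s`–`t` paths: following positive edges from `s` must end at `t`, since the walk cannot cycle;
subtract the bottleneck value along that path and recurse on the smaller support. Every path
meets `S i` in at most one edge, so `∑ e ∈ S i, r e` lies in `[0, 1]` on path vectors: for
binary `b i` each constraint is a supporting hyperplane of the hull of the paths, so every
path carrying weight in the decomposition of a feasible flow is itself feasible. The feasible
set thus lies in the convex hull of finitely many feasible binary vectors, and a linear cost
attains its minimum over it at one of them.
-/

open Finset

/-- `IsTrail tail head u v l`: the list of edges `l` forms a directed walk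
from vertex `u` to vertex `v` (consecutive edges chained head-to-tail). -/
def IsTrail {E V : Type*} (tail head : E → V) : V → V → List E → Prop
  | u, v, [] => u = v
  | u, v, e :: l => tail e = u ∧ IsTrail tail head (head e) v l

/-- A directed graph (given by tail/head maps) is acyclic if it has no
nonempty directed closed walk. -/
def GraphAcyclic {E V : Type*} (tail head : E → V) : Prop :=
  ¬ ∃ (v : V) (l : List E), l ≠ [] ∧ IsTrail tail head v v l

/-- A unit `s`–`t` flow: edge values in `[0,1]`, flow conservation at every
vertex other than `s` and `t`, net outflow `1` at `s`, net inflow `1` at `t`. -/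
def IsUnitFlow {E V : Type*} [Fintype E] [DecidableEq V]
    (tail head : E → V) (s t : V) (r : E → ℝ) : Prop :=
  (∀ e, 0 ≤ r e ∧ r e ≤ 1) ∧
  (∀ v : V, v ≠ s → v ≠ t →
    ∑ e ∈ univ.filter (fun e => head e = v), r e
      = ∑ e ∈ univ.filter (fun e => tail e = v), r e) ∧
  (∑ e ∈ univ.filter (fun e => tail e = s), r e
      - ∑ e ∈ univ.filter (fun e => head e = s), r e = 1) ∧
  (∑ e ∈ univ.filter (fun e => head e = t), r e
      - ∑ e ∈ univ.filter (fun e => tail e = t), r e = 1)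

open scoped Pointwise

section ConvexHull

variable {𝕜 M : Type*} [Field 𝕜] [LinearOrder 𝕜] [IsStrictOrderedRing 𝕜]
  [AddCommGroup M] [Module 𝕜 M]

theorem Finset.eq_of_sum_mul_eq_of_le {κ : Type*} {t : Finset κ} {w a : κ → 𝕜} {B : 𝕜}
    (hw : ∀ k ∈ t, 0 ≤ w k) (hw₁ : ∑ k ∈ t, w k = 1) (ha : ∀ k ∈ t, a k ≤ B)
    (h : ∑ k ∈ t, w k * a k = B) {k : κ} (hk : k ∈ t) (hwk : w k ≠ 0) : a k = B := by
  have heq : ∑ k ∈ t, w k * a k = ∑ k ∈ t, w k * B := by rw [← sum_mul, hw₁, one_mul, h]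
  exact mul_left_cancel₀ hwk <|
    (sum_eq_sum_iff_of_le fun k hk => mul_le_mul_of_nonneg_left (ha k hk) (hw k hk)).1 heq k hk

theorem mem_convexHull_sep_of_supporting {ι : Type*} {A : Set M} {x : M}
    (hx : x ∈ convexHull 𝕜 A) (f : ι → M →ₗ[𝕜] 𝕜) (B : ι → 𝕜)
    (hf : ∀ i, (∀ a ∈ A, f i a ≤ B i) ∨ ∀ a ∈ A, B i ≤ f i a) (hfx : ∀ i, f i x = B i) :
    x ∈ convexHull 𝕜 {a ∈ A | ∀ i, f i a = B i} := by
  classical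
  rw [_root_.convexHull_eq] at hx
  obtain ⟨κ, t, w, z, hw, hw₁, hz, rfl⟩ := hx
  have hface : ∀ k ∈ t, w k ≠ 0 → ∀ i, f i (z k) = B i := by
    intro k hk hwk i
    have hsum : ∑ k ∈ t, w k * f i (z k) = B i := by
      simp [← hfx i, centerMass_eq_of_sum_1 _ _ hw₁, map_sum]
    rcases hf i with hle | hge
    · exact eq_of_sum_mul_eq_of_le hw hw₁ (fun k hk => hle _ (hz k hk)) hsum hk hwk
    · exact neg_inj.1 <| eq_of_sum_mul_eq_of_le (a := fun k => -f i (z k)) hw hw₁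
        (fun k hk => neg_le_neg (hge _ (hz k hk))) (by simp [hsum]) hk hwk
  rw [← centerMass_filter_ne_zero]
  refine centerMass_mem_convexHull _ (fun k hk => hw k (mem_filter.1 hk).1) ?_ fun k hk => ?_
  · rw [sum_filter_ne_zero, hw₁]
    exact one_pos
  · obtain ⟨hk, hwk⟩ := mem_filter.1 hk
    exact ⟨hz k hk, hface k hk hwk⟩

theorem exists_forall_le_of_subset_convexHull {A F : Set M} (hA : A.Finite)
    (hFA : F ⊆ convexHull 𝕜 A) (hF : F.Nonempty) (φ : M →ₗ[𝕜] 𝕜) :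
    ∃ p ∈ A, ∀ x ∈ F, φ p ≤ φ x := by
  obtain ⟨p, hpA, hpmin⟩ := A.exists_min_image φ hA (convexHull_nonempty_iff.1 (hF.mono hFA))
  refine ⟨p, hpA, fun x hx => ?_⟩
  obtain ⟨a, haA, ha⟩ :=
    (φ.concaveOn convex_univ).exists_le_of_mem_convexHull (Set.subset_univ _) (hFA hx)
  exact (hpmin a haA).trans ha

end ConvexHull

section Trails

variable {E V : Type*} {tail head : E → V}

theorem isTrail_append {u v : V} {l₁ l₂ : List E} :
    IsTrail tail head u v (l₁ ++ l₂) ↔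
      ∃ w, IsTrail tail head u w l₁ ∧ IsTrail tail head w v l₂ := by
  induction l₁ generalizing u with
  | nil => simp [IsTrail]
  | cons e l ih => simp only [List.cons_append, IsTrail, ih, and_assoc, exists_and_left]

theorem IsTrail.nodup (hacyc : GraphAcyclic tail head) {u v : V} {l : List E}
    (h : IsTrail tail head u v l) : l.Nodup := by
  induction l generalizing u with
  | nil => exact List.nodup_nil
  | cons e l ih =>
    obtain ⟨rfl, h⟩ := h
    refine List.nodup_cons.2 ⟨fun he => ?_, ih h⟩
    obtain ⟨a, b, rfl⟩ := List.append_of_mem he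
    obtain ⟨w, ha, hw, -⟩ := isTrail_append.1 h
    exact hacyc ⟨tail e, e :: a, List.cons_ne_nil _ _, rfl, hw ▸ ha⟩

theorem GraphAcyclic.wellFounded [Finite V] (hacyc : GraphAcyclic tail head) :
    WellFounded fun w v : V => ∃ e, tail e = v ∧ head e = w := by
  let R := fun w v : V => ∃ e, tail e = v ∧ head e = w
  have htrail {w v : V} (h : Relation.TransGen R w v) :
      ∃ l ≠ [], IsTrail tail head v w l := by
    induction h with
    | single h =>
      obtain ⟨e, rfl, rfl⟩ := h
      exact ⟨[e], List.cons_ne_nil _ _, rfl, rfl⟩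
    | tail _ h ih =>
      obtain ⟨e, rfl, rfl⟩ := h
      obtain ⟨l, -, hl⟩ := ih
      exact ⟨e :: l, List.cons_ne_nil _ _, rfl, hl⟩
  have : IsTrans V (Relation.TransGen R) := ⟨fun _ _ _ => Relation.TransGen.trans⟩
  have : Std.Irrefl (Relation.TransGen R) :=
    ⟨fun v hv => hacyc <| let ⟨l, hl, htr⟩ := htrail hv; ⟨v, l, hl, htr⟩⟩
  exact Subrelation.wf (Relation.TransGen.single (r := R)) (Finite.wellFounded_of_trans_of_irrefl _)

end Trails

section PathFlow

variable {E : Type*} [DecidableEq E]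

def pathFlow (l : List E) : E → ℝ := fun e => l.count e

theorem pathFlow_cons (e : E) (l : List E) : pathFlow (e :: l) = Pi.single e 1 + pathFlow l := by
  ext e'
  simp [pathFlow, List.count_cons, Pi.single_apply, add_comm, @eq_comm _ e]

theorem pathFlow_of_nodup {l : List E} (hl : l.Nodup) (e : E) :
    pathFlow l e = if e ∈ l then 1 else 0 := by
  by_cases he : e ∈ l
  · simp [pathFlow, he, List.count_eq_one_of_mem hl he]
  · simp [pathFlow, he, List.count_eq_zero_of_not_mem he]

theorem sum_pathFlow (S : Finset E) (l : List E) :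
    ∑ e ∈ S, pathFlow l e = l.countP (fun e => decide (e ∈ S)) := by
  induction l with
  | nil => simp [pathFlow]
  | cons a l ih =>
    simp only [pathFlow_cons, Pi.add_apply, sum_add_distrib, ih, List.countP_cons,
      sum_pi_single', decide_eq_true_eq]
    push_cast
    ring

theorem pathFlow_eq_zero_or_one {l : List E} (hl : l.Nodup) (e : E) :
    pathFlow l e = 0 ∨ pathFlow l e = 1 := by
  rw [pathFlow_of_nodup hl]
  split_ifs <;> simp

end PathFlow

section Flows

variable {E V : Type*} [Fintype E] [DecidableEq V] {tail head : E → V}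

variable (tail head) in
def netOutflow : (E → ℝ) →ₗ[ℝ] V → ℝ where
  toFun r v := ∑ e with tail e = v, r e - ∑ e with head e = v, r e
  map_add' r r' := by
    ext v
    simp only [Pi.add_apply, sum_add_distrib]
    ring
  map_smul' m r := by
    ext v
    simp only [Pi.smul_apply, smul_eq_mul, ← mul_sum, RingHom.id_apply]
    ring

theorem netOutflow_apply (r : E → ℝ) (v : V) :
    netOutflow tail head r v = ∑ e with tail e = v, r e - ∑ e with head e = v, r e := rfl

theorem isUnitFlow_iff {s t : V} (hst : s ≠ t) {r : E → ℝ} :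
    IsUnitFlow tail head s t r ↔
      (∀ e, 0 ≤ r e ∧ r e ≤ 1) ∧ netOutflow tail head r = Pi.single s 1 - Pi.single t 1 := by
  refine and_congr_right fun _ => ?_
  simp only [funext_iff, netOutflow_apply, Pi.sub_apply, Pi.single_apply]
  constructor
  · rintro ⟨hcons, hs, ht⟩ v
    by_cases hvs : v = s
    · simp [hvs, hst, hs]
    by_cases hvt : v = t
    · simp only [hvt, Ne.symm hst, ↓reduceIte, zero_sub]
      linarith
    simp [hvs, hvt, hcons v hvs hvt]
  · intro h
    refine ⟨fun v hvs hvt => ?_, by simpa [hst] using h s, ?_⟩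
    · linarith [show _ = _ by simpa [hvs, hvt] using h v]
    · linarith [show _ = _ by simpa [Ne.symm hst] using h t]

theorem exists_pos_trail_to_netOutflow_neg [Finite V] (hacyc : GraphAcyclic tail head)
    {r : E → ℝ} (hr : 0 ≤ r) (u : V) (hu : ∃ e, tail e = u ∧ 0 < r e) :
    ∃ v l, IsTrail tail head u v l ∧ (∀ e ∈ l, 0 < r e) ∧ netOutflow tail head r v < 0 := by
  induction u using hacyc.wellFounded.induction with
  | _ u ih =>
  obtain ⟨e, rfl, hre⟩ := hu
  by_cases hv : netOutflow tail head r (head e) < 0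
  · exact ⟨head e, [e], ⟨rfl, rfl⟩, by simpa using hre, hv⟩
  have hout : ∃ e', tail e' = head e ∧ 0 < r e' := by
    have hin : r e ≤ ∑ e' with head e' = head e, r e' :=
      single_le_sum (fun e' _ => hr e') (mem_filter.2 ⟨mem_univ e, rfl⟩)
    rw [netOutflow_apply] at hv
    simpa using
      (sum_pos_iff_of_nonneg (s := {e' | tail e' = head e}) fun e' _ => hr e').1 (by linarith)
  obtain ⟨v, l, hl, hpos, hv⟩ := ih (head e) ⟨e, rfl, rfl⟩ hout
  exact ⟨v, e :: l, ⟨rfl, hl⟩, List.forall_mem_cons.2 ⟨hre, hpos⟩, hv⟩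

theorem eq_zero_of_netOutflow_eq_zero [Finite V] (hacyc : GraphAcyclic tail head)
    {r : E → ℝ} (hr : 0 ≤ r) (h : netOutflow tail head r = 0) : r = 0 := by
  by_contra hne
  obtain ⟨e, he⟩ : ∃ e, 0 < r e := by
    by_contra! hle
    exact hne (funext fun e => le_antisymm (hle e) (hr e))
  obtain ⟨v, -, -, -, hv⟩ := exists_pos_trail_to_netOutflow_neg hacyc hr _ ⟨e, rfl, he⟩
  simp [h] at hv

theorem exists_pos_trail_of_netOutflow_eq [Finite V] (hacyc : GraphAcyclic tail head)
    {s t : V} (hst : s ≠ t) {r : E → ℝ} {F : ℝ} (hr : 0 ≤ r) (hF : 0 < F)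
    (hflow : netOutflow tail head r = F • (Pi.single s 1 - Pi.single t 1)) :
    ∃ l, IsTrail tail head s t l ∧ l ≠ [] ∧ ∀ e ∈ l, 0 < r e := by
  have hs : ∃ e, tail e = s ∧ 0 < r e := by
    have := congrFun hflow s
    simp only [netOutflow_apply, Pi.smul_apply, Pi.sub_apply, Pi.single_eq_same,
      Pi.single_eq_of_ne hst, sub_zero, smul_eq_mul, mul_one] at this
    have hin : 0 ≤ ∑ e with head e = s, r e := sum_nonneg fun e _ => hr e
    simpa using (sum_pos_iff_of_nonneg (s := {e | tail e = s}) fun e _ => hr e).1 (by linarith)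
  obtain ⟨v, l, hl, hpos, hv⟩ := exists_pos_trail_to_netOutflow_neg hacyc hr s hs
  obtain rfl : v = t := by
    by_contra hvt
    rw [hflow] at hv
    simp only [Pi.smul_apply, Pi.sub_apply, Pi.single_eq_of_ne hvt, sub_zero, smul_eq_mul] at hv
    exact hv.not_ge (mul_nonneg hF.le (by rw [Pi.single_apply]; split_ifs <;> norm_num))
  refine ⟨l, hl, ?_, hpos⟩
  rintro rfl
  exact hst hl

variable [DecidableEq E]

theorem netOutflow_single (e : E) :
    netOutflow tail head (Pi.single e 1) = Pi.single (tail e) 1 - Pi.single (head e) 1 := by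
  ext v
  simp [netOutflow_apply, Pi.single_apply, eq_comm]

theorem IsTrail.netOutflow_pathFlow {u v : V} {l : List E} (h : IsTrail tail head u v l) :
    netOutflow tail head (pathFlow l) = Pi.single u 1 - Pi.single v 1 := by
  induction l generalizing u with
  | nil =>
    cases h
    ext
    simp [pathFlow, netOutflow_apply]
  | cons e l ih =>
    obtain ⟨rfl, h⟩ := h
    rw [pathFlow_cons, map_add, netOutflow_single, ih h]
    abel

theorem IsTrail.isUnitFlow_pathFlow (hacyc : GraphAcyclic tail head) {s t : V} (hst : s ≠ t)
    {l : List E} (hl : IsTrail tail head s t l) : IsUnitFlow tail head s t (pathFlow l) := by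
  refine (isUnitFlow_iff hst).2 ⟨fun e => ?_, hl.netOutflow_pathFlow⟩
  rcases pathFlow_eq_zero_or_one (hl.nodup hacyc) e with h | h <;> simp [h]

theorem card_support_sub_smul_pathFlow_lt {r : E → ℝ} {l : List E} (hl : l.Nodup)
    (hpos : ∀ e ∈ l, 0 < r e) {e₀ : E} (he₀ : e₀ ∈ l) :
    #{e | (r - r e₀ • pathFlow l) e ≠ 0} < #{e | r e ≠ 0} := by
  refine card_lt_card ((ssubset_iff_of_subset fun e => ?_).2 ⟨e₀, ?_, ?_⟩)
  · simp only [mem_filter, mem_univ, true_and]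
    contrapose!
    intro h0
    have he : e ∉ l := fun he => (hpos e he).ne' h0
    simp [pathFlow_of_nodup hl, he, h0]
  · simp [(hpos e₀ he₀).ne']
  · simp [pathFlow_of_nodup hl, he₀]

theorem mem_smul_convexHull_pathFlows [Finite V] (hacyc : GraphAcyclic tail head) {s t : V}
    (hst : s ≠ t) {r : E → ℝ} {F : ℝ} (hr : 0 ≤ r) (hF : 0 < F)
    (hflow : netOutflow tail head r = F • (Pi.single s 1 - Pi.single t 1)) :
    r ∈ F • convexHull ℝ (pathFlow '' {l | IsTrail tail head s t l}) := by
  induction hn : #{e | r e ≠ 0} using Nat.strong_induction_on generalizing r F with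
  | _ n ih =>
  obtain ⟨l, hl, hne, hpos⟩ := exists_pos_trail_of_netOutflow_eq hacyc hst hr hF hflow
  have hnd := hl.nodup hacyc
  obtain ⟨e₀, he₀, hmin⟩ := l.toFinset.exists_min_image r ((List.toFinset_nonempty_iff l).2 hne)
  rw [List.mem_toFinset] at he₀
  have hpeel : ∀ m ≤ r e₀, 0 ≤ r - m • pathFlow l := by
    intro m hm e
    simp only [Pi.zero_apply, Pi.sub_apply, Pi.smul_apply, smul_eq_mul, pathFlow_of_nodup hnd]
    split_ifs with he
    · linarith [hmin e (List.mem_toFinset.2 he)]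
    · simpa using hr e
  have hnet : ∀ m, netOutflow tail head (r - m • pathFlow l) =
      (F - m) • (Pi.single s 1 - Pi.single t 1) := by
    intro m
    rw [map_sub, map_smul, hl.netOutflow_pathFlow, hflow, sub_smul]
  have hχ : pathFlow l ∈ convexHull ℝ (pathFlow '' {l | IsTrail tail head s t l}) :=
    subset_convexHull ℝ _ ⟨l, hl, rfl⟩
  -- If the bottleneck `r e₀` reaches `F`, subtracting `F` along `l` leaves a circulation.
  rcases le_or_gt F (r e₀) with hFm | hmF
  · have h0 := eq_zero_of_netOutflow_eq_zero hacyc (hpeel F hFm) (by rw [hnet, sub_self, zero_smul])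
    exact ⟨pathFlow l, hχ, (sub_eq_zero.1 h0).symm⟩
  · obtain ⟨y, hy, hry⟩ := ih _ (hn ▸ card_support_sub_smul_pathFlow_lt hnd hpos he₀)
      (hpeel _ le_rfl) (sub_pos.2 hmF) (hnet _) rfl
    refine ⟨(r e₀ / F) • pathFlow l + ((F - r e₀) / F) • y,
      convex_convexHull ℝ _ hχ hy (div_nonneg (hr e₀) hF.le) (div_nonneg (sub_pos.2 hmF).le hF.le)
        (by field_simp; ring), ?_⟩
    simp only [smul_add, smul_smul, mul_div_cancel₀ _ hF.ne', hry]
    abel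

theorem mem_convexHull_pathFlows_of_isUnitFlow [Finite V] (hacyc : GraphAcyclic tail head)
    {s t : V} (hst : s ≠ t) {r : E → ℝ} (hr : IsUnitFlow tail head s t r) :
    r ∈ convexHull ℝ (pathFlow '' {l | IsTrail tail head s t l}) := by
  obtain ⟨hbd, hflow⟩ := (isUnitFlow_iff hst).1 hr
  simpa using mem_smul_convexHull_pathFlows hacyc hst (fun e => (hbd e).1) one_pos
    (by rw [hflow, one_smul])

theorem mem_convexHull_feasible_pathFlows [Finite V] (hacyc : GraphAcyclic tail head)
    {s t : V} (hst : s ≠ t) {ι : Type*} (S : ι → Finset E) (b : ι → ℝ)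
    (hb : ∀ i, b i = 0 ∨ b i = 1)
    (hpath : ∀ i l, l ≠ [] → IsTrail tail head s t l → l.countP (fun e => decide (e ∈ S i)) ≤ 1)
    {r : E → ℝ} (hr : IsUnitFlow tail head s t r) (hrS : ∀ i, ∑ e ∈ S i, r e = b i) :
    r ∈ convexHull ℝ
      {a ∈ pathFlow '' {l | IsTrail tail head s t l} | ∀ i, ∑ e ∈ S i, a e = b i} := by
  let σ : ι → (E → ℝ) →ₗ[ℝ] ℝ := fun i => ∑ e ∈ S i, LinearMap.proj e
  have hσ (i : ι) (x : E → ℝ) : σ i x = ∑ e ∈ S i, x e := by simp [σ]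
  have hface := mem_convexHull_sep_of_supporting
    (mem_convexHull_pathFlows_of_isUnitFlow hacyc hst hr) σ b (fun i => ?_) fun i => by rw [hσ, hrS]
  · simpa only [hσ] using hface
  rcases hb i with h | h
  · right
    rintro _ ⟨l, -, rfl⟩
    rw [hσ, h, sum_pathFlow]
    positivity
  · left
    rintro _ ⟨l, hl, rfl⟩
    rw [hσ, h, sum_pathFlow]
    exact_mod_cast hpath i l (by rintro rfl; exact hst hl) hl

end Flows

/-- (Tight LP relaxation of the dynamic network flow
formulation with fixed binary predicate values.) On a finite acyclic directed
graph, if every directed `s`–`t` path meets each predicate edge set `S i` in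
at most one edge and the feasible set of unit `s`–`t` flows with
`Σ_{e ∈ S i} r e = b i` (binary `b i`) is nonempty, then the linear cost
attains its minimum over this set at a flow with all values in `{0,1}`. -/
theorem dnf_lp_relaxation_tight {E V : Type*}
    [Fintype E] [DecidableEq E] [Fintype V] [DecidableEq V]
    (tail head : E → V) (s t : V) (hst : s ≠ t)
    (hacyc : GraphAcyclic tail head)
    (c : E → ℝ) (N : ℕ) (S : Fin N → Finset E) (b : Fin N → ℝ)
    (hb : ∀ i, b i = 0 ∨ b i = 1)
    (hpath : ∀ (i : Fin N) (l : List E), l ≠ [] → IsTrail tail head s t l →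
      l.countP (fun e => decide (e ∈ S i)) ≤ 1)
    (hne : {r : E → ℝ | IsUnitFlow tail head s t r ∧
      ∀ i, ∑ e ∈ S i, r e = b i}.Nonempty) :
    ∃ r : E → ℝ,
      (IsUnitFlow tail head s t r ∧ ∀ i, ∑ e ∈ S i, r e = b i) ∧
      (∀ e, r e = 0 ∨ r e = 1) ∧
      (∀ r' : E → ℝ, (IsUnitFlow tail head s t r' ∧ ∀ i, ∑ e ∈ S i, r' e = b i) →
        ∑ e, c e * r e ≤ ∑ e, c e * r' e) := by
  set A := {a ∈ pathFlow '' {l | IsTrail tail head s t l} | ∀ i, ∑ e ∈ S i, a e = b i}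
  have hA : ∀ a ∈ A, (IsUnitFlow tail head s t a ∧ ∀ i, ∑ e ∈ S i, a e = b i) ∧
      ∀ e, a e = 0 ∨ a e = 1 := by
    rintro _ ⟨⟨l, hl, rfl⟩, hlS⟩
    exact ⟨⟨hl.isUnitFlow_pathFlow hacyc hst, hlS⟩, pathFlow_eq_zero_or_one (hl.nodup hacyc)⟩
  have hfin : A.Finite :=
    (Set.Finite.pi' fun _ => Set.toFinite {(0 : ℝ), 1}).subset fun a ha e => (hA a ha).2 e
  obtain ⟨p, hpA, hpmin⟩ := exists_forall_le_of_subset_convexHull hfin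
    (fun r hr => mem_convexHull_feasible_pathFlows hacyc hst S b hb hpath hr.1 hr.2) hne
    (∑ e, c e • LinearMap.proj e)
  exact ⟨p, (hA p hpA).1, (hA p hpA).2, fun r hr => by simpa using hpmin r hr⟩
end
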